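/- Let X be a reflexive real Banach space, H a real Hilbert space, and j : X → H an injective continuous linear map with dense range; define ι : H → X* by (ι p)(x) = ⟨j x, p⟩_H. Suppose L : X × X* → ℝ ∪ {+∞} is an anti-selfdual Lagrangian on X such that (1) for every x ∈ X the map p ↦ L(x,p) is continuous on X*, and (2) there exists x₀ ∈ X such that p ↦ L(x₀,p) is bounded on bounded subsets of X*. Then the Lagrangian M : H × H → ℝ ∪ {+∞} defined by M(j x, p) = L(x, ι p) for x ∈ X and p ∈ H, and M(h, p) = +∞ whenever h ∉ j(X), is anti-selfdual on H × H (with H identified with its dual via its inner product). -/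

import Mathlib

open scoped RealInnerProductSpace

noncomputable section

/-- Convexity for `EReal`-valued functions. -/
def ERealConvexOn {E : Type*} [AddCommGroup E] [Module ℝ E] (f : E → EReal) : Prop :=
  ∀ x y : E, ∀ s t : ℝ, 0 ≤ s → 0 ≤ t → s + t = 1 →
    f (s • x + t • y) ≤ (s : EReal) * f x + (t : EReal) * f y

/-- The Legendre–Fenchel dual, in both variables, of a Lagrangian on a Banach space `X`. -/
def lagrangianDual {X : Type*} [NormedAddCommGroup X] [NormedSpace ℝ X]
    (L : X × (X →L[ℝ] ℝ) → EReal) (q : X →L[ℝ] ℝ) (y : X) : EReal :=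
  ⨆ x : X, ⨆ p : X →L[ℝ] ℝ, ((q x + p y : ℝ) : EReal) - L (x, p)

/-- A Lagrangian on a Banach space is anti-selfdual if `L*(p,x) = L(−x,−p)`. -/
def IsASD {X : Type*} [NormedAddCommGroup X] [NormedSpace ℝ X]
    (L : X × (X →L[ℝ] ℝ) → EReal) : Prop :=
  ∀ (p : X →L[ℝ] ℝ) (x : X), lagrangianDual L p x = L (-x, -p)

/-- The Legendre–Fenchel dual, in both variables, of a Lagrangian on a Hilbert space `H`. -/
def lagrangianDualH {H : Type*} [NormedAddCommGroup H] [InnerProductSpace ℝ H]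
    (M : H × H → EReal) (q y : H) : EReal :=
  ⨆ x : H, ⨆ p : H, ((⟪q, x⟫ + ⟪y, p⟫ : ℝ) : EReal) - M (x, p)

/-- A Lagrangian on a Hilbert space is anti-selfdual if `M*(p,x) = M(−x,−p)`. -/
def IsASDH {H : Type*} [NormedAddCommGroup H] [InnerProductSpace ℝ H]
    (M : H × H → EReal) : Prop :=
  ∀ p x : H, lagrangianDualH M p x = M (-x, -p)

/-- Reflexivity of a normed space. -/
def IsReflexiveSpace (X : Type*) [NormedAddCommGroup X] [NormedSpace ℝ X] : Prop :=
  ∀ F : (X →L[ℝ] ℝ) →L[ℝ] ℝ, ∃ x : X, ∀ p : X →L[ℝ] ℝ, F p = p x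

/-!
Write `ι p = ⟪j ·, p⟫ ∈ X*`. As `M = ⊤` off `j(X) × H`, `M*(p, h)` is the supremum over `x ∈ X`,
`q ∈ H` of `⟪p, j x⟫ + ⟪h, q⟫ - L(x, ι q)`. Injectivity of `j` and reflexivity of `X` make `ι(H)`
dense in `X*` (Hahn–Banach), so for `h = j y` continuity of `L(x, ·)` turns the supremum over `q`
into one over all of `X*`, i.e. into `L*(ι p, y) = L(-y, -ι p) = M(-j y, -p)`.
If `h ∉ j(X)` and the supremum were finite, taking `x = x₀` and the bound on `L(x₀, ·)` over the
unit ball would give `|⟪h, q⟫| ≤ K ‖ι q‖`; then `q ↦ ⟪h, q⟫` factors through `ι`, extends to `X*`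
by Hahn–Banach, and by reflexivity is evaluation at some `y`, forcing `h = j y`.
-/
lemma EReal.continuous_coe_sub {β : Type*} [TopologicalSpace β] {u : β → ℝ} {v : β → EReal}
    (hu : Continuous u) (hv : Continuous v) : Continuous fun b => (u b : EReal) - v b := by
  simp_rw [sub_eq_add_neg]
  refine continuous_iff_continuousAt.2 fun b => ?_
  have hpair : Continuous fun b => ((u b : EReal), -v b) :=
    (continuous_coe_real_ereal.comp hu).prodMk hv.neg
  exact (EReal.continuousAt_add (Or.inl (EReal.coe_ne_top _)) (Or.inl (EReal.coe_ne_bot _))).comp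
    hpair.continuousAt

lemma LowerSemicontinuous.iSup_comp_of_denseRange {α β γ : Type*} [TopologicalSpace β]
    [CompleteLinearOrder γ] [TopologicalSpace γ] {f : β → γ} (hf : LowerSemicontinuous f)
    {e : α → β} (he : DenseRange e) : ⨆ a, f (e a) = ⨆ b, f b := by
  refine le_antisymm (iSup_le fun a => le_iSup f (e a)) (iSup_le fun b => ?_)
  have hsub : Set.range e ⊆ f ⁻¹' Set.Iic (⨆ a, f (e a)) := by
    rintro _ ⟨a, rfl⟩
    exact le_iSup (fun a => f (e a)) a
  exact (hf.isClosed_preimage _).closure_subset_iff.2 hsub (he b)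

lemma LinearMap.eq_zero_of_forall_mem_lt {E : Type*} [AddCommGroup E] [Module ℝ E]
    (f : E →ₗ[ℝ] ℝ) (S : Submodule ℝ E) {u : ℝ} (hf : ∀ a ∈ S, f a < u) {a : E} (ha : a ∈ S) :
    f a = 0 := by
  by_contra h
  have := hf ((u / f a) • a) (S.smul_mem _ ha)
  rw [map_smul, smul_eq_mul, div_mul_cancel₀ _ h] at this
  exact this.false

theorem Submodule.dense_of_forall_dual_eq_zero {E : Type*} [NormedAddCommGroup E]
    [NormedSpace ℝ E] (S : Submodule ℝ E)
    (hS : ∀ f : E →L[ℝ] ℝ, (∀ a ∈ S, f a = 0) → f = 0) : Dense (S : Set E) := by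
  intro r
  by_contra hr
  rw [← S.topologicalClosure_coe, SetLike.mem_coe] at hr
  obtain ⟨f, u, hfS, hfr⟩ := geometric_hahn_banach_closed_point
    S.topologicalClosure.convex S.isClosed_topologicalClosure hr
  have hf : f = 0 := hS f fun a ha =>
    f.toLinearMap.eq_zero_of_forall_mem_lt _ hfS (S.le_topologicalClosure ha)
  have hu := hfS 0 (zero_mem _)
  simp only [hf, zero_apply] at hu hfr
  exact (hu.trans hfr).false

lemma LinearMap.abs_le_mul_norm_of_forall_norm_le_one {E F : Type*} [AddCommGroup E] [Module ℝ E]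
    [SeminormedAddCommGroup F] [NormedSpace ℝ F] (T : E →ₗ[ℝ] F) (φ : E →ₗ[ℝ] ℝ) {K : ℝ}
    (h : ∀ e, ‖T e‖ ≤ 1 → φ e ≤ K) (e : E) : |φ e| ≤ K * ‖T e‖ := by
  have hK : 0 ≤ K := by simpa using h 0 (by simp)
  have upper : ∀ e, φ e ≤ K * ‖T e‖ := by
    intro e
    refine le_of_forall_pos_le_add fun δ hδ => ?_
    set c := ‖T e‖ + δ / (K + 1)
    have hc : 0 < c := by positivity
    have hscaled := h (c⁻¹ • e) (by
      rw [map_smul, norm_smul, Real.norm_of_nonneg (inv_nonneg.2 hc.le)]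
      exact inv_mul_le_one_of_le₀ (by simp [c]; positivity) hc.le)
    rw [map_smul, smul_eq_mul, inv_mul_le_iff₀ hc] at hscaled
    calc φ e ≤ K * c := by linarith
      _ = K * ‖T e‖ + δ * (K / (K + 1)) := by ring
      _ ≤ K * ‖T e‖ + δ := by
        gcongr
        exact mul_le_of_le_one_right hδ.le ((div_le_one (by positivity)).2 (by linarith))
  have lower := upper (-e)
  rw [map_neg, map_neg, norm_neg] at lower
  exact abs_le.2 ⟨by linarith, upper e⟩

section

variable {X E : Type*} [NormedAddCommGroup X] [NormedSpace ℝ X] [AddCommGroup E] [Module ℝ E]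

theorem IsReflexiveSpace.denseRange_of_forall_apply_eq_zero (hX : IsReflexiveSpace X)
    (T : E →ₗ[ℝ] (X →L[ℝ] ℝ)) (hT : ∀ x : X, (∀ e, T e x = 0) → x = 0) : DenseRange T := by
  rw [DenseRange, ← LinearMap.coe_range]
  refine (LinearMap.range T).dense_of_forall_dual_eq_zero fun F hF => ?_
  obtain ⟨x, hx⟩ := hX F
  have hx0 : x = 0 := hT x fun e => (hx (T e)).symm.trans (hF _ ⟨e, rfl⟩)
  ext p
  simp [hx, hx0]

theorem IsReflexiveSpace.exists_apply_eq_of_abs_le (hX : IsReflexiveSpace X)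
    (T : E →ₗ[ℝ] (X →L[ℝ] ℝ)) (φ : E →ₗ[ℝ] ℝ) {K : ℝ} (hφ : ∀ e, |φ e| ≤ K * ‖T e‖) :
    ∃ x : X, ∀ e, φ e = T e x := by
  have hker : LinearMap.ker T ≤ LinearMap.ker φ := fun e he => by
    simpa [LinearMap.mem_ker.1 he] using hφ e
  -- `φ` factors through `T` as a functional on `range T`, bounded by `K`
  let ψ : LinearMap.range T →ₗ[ℝ] ℝ := (LinearMap.ker T).liftQ φ hker ∘ₗ T.quotKerEquivRange.symm
  have hψ : ∀ e, ψ ⟨T e, LinearMap.mem_range_self T e⟩ = φ e := fun e => by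
    rw [LinearMap.comp_apply, LinearEquiv.coe_coe, LinearMap.quotKerEquivRange_symm_apply_image]
    rfl
  have hψK : ∀ r, ‖ψ r‖ ≤ K * ‖r‖ := by
    rintro ⟨_, e, rfl⟩
    simpa [hψ] using hφ e
  obtain ⟨F, hF, -⟩ :=
    exists_extension_norm_eq _ (LinearMap.mkContinuous (𝕜 := ℝ) (𝕜₂ := ℝ) ψ K hψK)
  obtain ⟨x, hx⟩ := hX F
  exact ⟨x, fun e => by rw [← hx, ← hψ e, hF ⟨T e, LinearMap.mem_range_self T e⟩]; rfl⟩

end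

theorem lagrangianDualH_eq_iSup_of_eq_top {Y H : Type*} [NormedAddCommGroup H]
    [InnerProductSpace ℝ H] (j : Y → H) {M : H × H → EReal}
    (hM : ∀ h p : H, h ∉ Set.range j → M (h, p) = ⊤) (q y : H) :
    lagrangianDualH M q y = ⨆ x, ⨆ p : H, ((⟪q, j x⟫ + ⟪y, p⟫ : ℝ) : EReal) - M (j x, p) := by
  refine le_antisymm (iSup_le fun h => iSup_le fun p => ?_)
    (iSup_le fun x => iSup_le fun p => le_iSup_of_le (j x) (le_iSup_of_le p le_rfl))
  by_cases hh : h ∈ Set.range j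
  · obtain ⟨x, rfl⟩ := hh
    exact le_iSup_of_le x (le_iSup_of_le p le_rfl)
  · simp [hM h p hh]

section

variable {X H : Type*} [NormedAddCommGroup X] [NormedSpace ℝ X]
  [NormedAddCommGroup H] [InnerProductSpace ℝ H]

/-- The map `ι : H → X*` of the statement, i.e. `j*` composed with the Riesz isomorphism. -/
def innerTranspose (j : X →L[ℝ] H) : H →ₗ[ℝ] (X →L[ℝ] ℝ) :=
  ((ContinuousLinearMap.compL ℝ X H ℝ).flip j ∘L innerSL ℝ).toLinearMap

@[simp]
theorem innerTranspose_apply (j : X →L[ℝ] H) (p : H) (x : X) :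
    innerTranspose j p x = ⟪j x, p⟫ :=
  real_inner_comm _ _

theorem denseRange_innerTranspose (hX : IsReflexiveSpace X) {j : X →L[ℝ] H}
    (hj : Function.Injective j) : DenseRange (innerTranspose j) :=
  hX.denseRange_of_forall_apply_eq_zero _ fun x hx =>
    (injective_iff_map_eq_zero j).1 hj x (by simpa using hx (j x))

theorem mem_range_of_iSup_ne_top (hX : IsReflexiveSpace X) (j : X →L[ℝ] H)
    {ℓ : (X →L[ℝ] ℝ) → EReal} {C : ℝ} (hℓ : ∀ r, ‖r‖ ≤ 1 → ℓ r ≤ C) (a : ℝ) {h : H}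
    (hsup : ⨆ q : H, ((a + ⟪h, q⟫ : ℝ) : EReal) - ℓ (innerTranspose j q) ≠ ⊤) :
    h ∈ Set.range j := by
  set s := (⨆ q : H, ((a + ⟪h, q⟫ : ℝ) : EReal) - ℓ (innerTranspose j q)).toReal
  have hbound : ∀ q, ‖innerTranspose j q‖ ≤ 1 → ⟪h, q⟫ ≤ s - a + C := by
    intro q hq
    have : ((a + ⟪h, q⟫ - C : ℝ) : EReal) ≤ s :=
      calc ((a + ⟪h, q⟫ - C : ℝ) : EReal)
          ≤ ((a + ⟪h, q⟫ : ℝ) : EReal) - ℓ (innerTranspose j q) := by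
            rw [EReal.coe_sub]; exact EReal.sub_le_sub le_rfl (hℓ _ hq)
        _ ≤ _ := le_iSup_of_le q le_rfl
        _ ≤ s := EReal.le_coe_toReal hsup
    linarith [EReal.coe_le_coe_iff.1 this]
  obtain ⟨x, hx⟩ := hX.exists_apply_eq_of_abs_le (innerTranspose j) (innerSL ℝ h).toLinearMap
    ((innerTranspose j).abs_le_mul_norm_of_forall_norm_le_one _ hbound)
  exact ⟨x, ext_inner_right ℝ fun q => by simpa using (hx q).symm⟩

end

theorem stmt19_general {X H : Type*}
    [NormedAddCommGroup X] [NormedSpace ℝ X]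
    [NormedAddCommGroup H] [InnerProductSpace ℝ H]
    (hrefl : IsReflexiveSpace X)
    (j : X →L[ℝ] H) (hinj : Function.Injective j)
    (ι : H → (X →L[ℝ] ℝ)) (hι : ∀ (p : H) (x : X), ι p x = ⟪j x, p⟫)
    (L : X × (X →L[ℝ] ℝ) → EReal)
    (hASD : IsASD L)
    -- (1) continuity of `L(x, ·)` on `X*`
    (hcont : ∀ x : X, Continuous fun p : X →L[ℝ] ℝ => L (x, p))
    -- (2) boundedness of `L(x₀, ·)` on bounded sets of `X*`
    (x₀ : X)
    (hbdd : ∀ r : ℝ, ∃ C : ℝ, ∀ p : X →L[ℝ] ℝ, ‖p‖ ≤ r → L (x₀, p) ≤ (C : EReal))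
    (M : H × H → EReal)
    (hM₁ : ∀ (x : X) (p : H), M (j x, p) = L (x, ι p))
    (hM₂ : ∀ h p : H, h ∉ Set.range j → M (h, p) = ⊤) :
    IsASDH M := by
  obtain rfl : ι = innerTranspose j := funext fun p => ContinuousLinearMap.ext fun x => by
    simp [hι]
  intro p h
  rw [lagrangianDualH_eq_iSup_of_eq_top j hM₂]
  simp only [hM₁]
  by_cases hh : h ∈ Set.range j
  · obtain ⟨y, rfl⟩ := hh
    calc _ = ⨆ x, ⨆ r : X →L[ℝ] ℝ, ((innerTranspose j p x + r y : ℝ) : EReal) - L (x, r) := by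
          refine iSup_congr fun x => ?_
          rw [← (EReal.continuous_coe_sub (by fun_prop) (hcont x)).lowerSemicontinuous
            |>.iSup_comp_of_denseRange (denseRange_innerTranspose hrefl hinj)]
          simp [real_inner_comm]
      _ = L (-y, -innerTranspose j p) := hASD _ y
      _ = M (-j y, -p) := by rw [← map_neg, ← map_neg, hM₁]
  · have hneg : -h ∉ Set.range j := fun ⟨x, hx⟩ => hh ⟨-x, by rw [map_neg, hx, neg_neg]⟩
    rw [hM₂ _ _ hneg]
    by_contra hsup
    obtain ⟨C, hC⟩ := hbdd 1
    exact hh (mem_range_of_iSup_ne_top hrefl j hC ⟪p, j x₀⟫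
      (ne_top_of_le_ne_top hsup (le_iSup_of_le x₀ le_rfl)))

/-- lifting an ASD Lagrangian from a reflexive Banach space `X`, densely and
continuously embedded in a Hilbert space `H` via `j`, to an ASD Lagrangian on `H × H`. -/
theorem stmt19 {X H : Type*}
    [NormedAddCommGroup X] [NormedSpace ℝ X] [CompleteSpace X]
    [NormedAddCommGroup H] [InnerProductSpace ℝ H] [CompleteSpace H]
    (hrefl : IsReflexiveSpace X)
    (j : X →L[ℝ] H) (hinj : Function.Injective j) (hdense : DenseRange j)
    (ι : H → (X →L[ℝ] ℝ)) (hι : ∀ (p : H) (x : X), ι p x = ⟪j x, p⟫)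
    (L : X × (X →L[ℝ] ℝ) → EReal)
    (hconv : ERealConvexOn L)
    (hlsc : LowerSemicontinuous L)
    (hproper : ∃ z, L z ≠ ⊤) (hreal : ∀ z, L z ≠ ⊥)
    (hASD : IsASD L)
    -- (1) continuity of `L(x, ·)` on `X*`
    (hcont : ∀ x : X, Continuous fun p : X →L[ℝ] ℝ => L (x, p))
    -- (2) boundedness of `L(x₀, ·)` on bounded sets of `X*`
    (x₀ : X)
    (hbdd : ∀ r : ℝ, ∃ C : ℝ, ∀ p : X →L[ℝ] ℝ, ‖p‖ ≤ r → L (x₀, p) ≤ (C : EReal))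
    (M : H × H → EReal)
    (hM₁ : ∀ (x : X) (p : H), M (j x, p) = L (x, ι p))
    (hM₂ : ∀ h p : H, h ∉ Set.range j → M (h, p) = ⊤) :
    IsASDH M :=
  stmt19_general hrefl j hinj ι hι L hASD hcont x₀ hbdd M hM₁ hM₂
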